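/- arXiv:2404.09891 — 4 statements merged into one kernel-verified Lean document; each statement's English description precedes it below -/
import Mathlib

section
/- For integers 1 ≤ m ≤ n, the sum over k from m to n of [n,k] * {k,m} equals (n!/m!) * C(n-1, m-1), the Lah number. -/
open Finset

/-- Unsigned Stirling numbers of the first kind. -/
def stirling1 : ℕ → ℕ → ℕ
  | 0, 0 => 1
  | 0, _ + 1 => 0
  | _ + 1, 0 => 0
  | n + 1, k + 1 => n * stirling1 n (k + 1) + stirling1 n k

/-- Stirling numbers of the second kind. -/
def stirling2 : ℕ → ℕ → ℕ
  | 0, 0 => 1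
  | 0, _ + 1 => 0
  | _ + 1, 0 => 0
  | n + 1, k + 1 => (k + 1) * stirling2 n (k + 1) + stirling2 n k

/-- Generalized binomial coefficient `C(x, r) = x(x-1)⋯(x-r+1)/r!` in a ℚ-algebra. -/
noncomputable def gchoose {R : Type*} [CommRing R] [Algebra ℚ R] (x : R) (r : ℕ) : R :=
  algebraMap ℚ R ((r.factorial : ℚ)⁻¹) * ∏ i ∈ Finset.range r, (x - i)

/-!
The sum `∑ₖ [n,k] {k,m}` satisfies the recurrence `L(n+1, m+1) = (n+m+1) L(n, m+1) + L(n, m)`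
of the Lah numbers: it follows by expanding `[n+1,k+1]` and `{k+1,m+1}` by their own recurrences.
The closed form `(m+1)! L(n+1, m+1) = (n+1)! C(n, m)` then follows by induction on `n`, the
inductive step reducing to Pascal's rule together with `(m+1) C(n, m+1) = (n-m) C(n, m)`.
-/

theorem stirling1_eq_stirlingFirst : ∀ n k, stirling1 n k = Nat.stirlingFirst n k
  | 0, 0 | 0, _ + 1 | _ + 1, 0 => rfl
  | n + 1, k + 1 => by
    rw [stirling1, Nat.stirlingFirst_succ_succ, stirling1_eq_stirlingFirst n (k + 1),
      stirling1_eq_stirlingFirst n k]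

theorem stirling2_eq_stirlingSecond : ∀ n k, stirling2 n k = Nat.stirlingSecond n k
  | 0, 0 | 0, _ + 1 | _ + 1, 0 => rfl
  | n + 1, k + 1 => by
    rw [stirling2, Nat.stirlingSecond_succ_succ, stirling2_eq_stirlingSecond n (k + 1),
      stirling2_eq_stirlingSecond n k]

namespace Nat

def lah : ℕ → ℕ → ℕ
  | 0, 0 => 1
  | 0, _ + 1 => 0
  | _ + 1, 0 => 0
  | n + 1, k + 1 => (n + k + 1) * lah n (k + 1) + lah n k

theorem lah_succ_succ (n k : ℕ) :
    lah (n + 1) (k + 1) = (n + k + 1) * lah n (k + 1) + lah n k := rfl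

theorem add_two_mul_choose_succ_succ (n m : ℕ) :
    (n + 2) * (n + 1).choose (m + 1) = (n + m + 3) * n.choose (m + 1) + (m + 2) * n.choose m := by
  rw [choose_succ_succ]
  rcases le_or_gt m n with h | h
  · have h' := choose_succ_right_eq n m
    zify [h] at h' ⊢
    linear_combination -h'
  · simp [choose_eq_zero_of_lt h, choose_eq_zero_of_lt (by omega : n < m + 1)]

theorem factorial_mul_lah_succ_succ (n m : ℕ) :
    (m + 1)! * lah (n + 1) (m + 1) = (n + 1)! * n.choose m := by
  induction n generalizing m with
  | zero => cases m <;> rfl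
  | succ n ih =>
    cases m with
    | zero =>
      rw [lah_succ_succ, lah, mul_add, ← mul_left_comm, ih, factorial_succ (n + 1)]
      simp
    | succ m =>
      have ih₁ := ih (m + 1)
      have ih₂ := ih m
      have hchoose := add_two_mul_choose_succ_succ n m
      rw [factorial_succ (m + 1)] at ih₁ ⊢
      rw [lah_succ_succ, factorial_succ (n + 1)]
      linear_combination (n + m + 3) * ih₁ + (m + 2) * ih₂ + (n + 1)! * hchoose.symm

theorem sum_range_stirlingFirst_mul_stirlingSecond {n N : ℕ} (hN : n < N) (m : ℕ) :
    ∑ k ∈ range N, stirlingFirst n k * stirlingSecond k m = lah n m := by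
  induction n generalizing N m with
  | zero =>
    obtain ⟨N, rfl⟩ : ∃ N', N = N' + 1 := ⟨N - 1, by omega⟩
    rw [sum_range_succ']
    cases m <;> simp [lah]
  | succ n ih =>
    obtain ⟨N, rfl⟩ : ∃ N', N = N' + 1 := ⟨N - 1, by omega⟩
    cases m with
    | zero => simp [sum_range_succ', lah]
    | succ m =>
      have hshift :
          ∑ k ∈ range N, stirlingFirst n (k + 1) * stirlingSecond (k + 1) (m + 1) =
            lah n (m + 1) := by
        rw [← ih (N := N + 1) (by omega), sum_range_succ' _ N]
        simp
      calc ∑ k ∈ range (N + 1), stirlingFirst (n + 1) k * stirlingSecond k (m + 1)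
          = ∑ k ∈ range N,
              stirlingFirst (n + 1) (k + 1) * stirlingSecond (k + 1) (m + 1) := by
            simp [sum_range_succ']
        _ = ∑ k ∈ range N,
              (n * (stirlingFirst n (k + 1) * stirlingSecond (k + 1) (m + 1)) +
                (m + 1) * (stirlingFirst n k * stirlingSecond k (m + 1)) +
                stirlingFirst n k * stirlingSecond k m) := by
            refine sum_congr rfl fun k _ => ?_
            rw [stirlingFirst_succ_succ, stirlingSecond_succ_succ]
            ring
        _ = n * lah n (m + 1) + (m + 1) * lah n (m + 1) + lah n m := by
            rw [sum_add_distrib, sum_add_distrib, ← mul_sum, ← mul_sum, hshift,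
              ih (by omega), ih (by omega)]
        _ = lah (n + 1) (m + 1) := by
            rw [lah_succ_succ]
            ring

end Nat

theorem stmt1 (m n : ℕ) (hm : 1 ≤ m) (hmn : m ≤ n) :
    ∑ k ∈ Finset.Icc m n, (stirling1 n k * stirling2 k m : ℚ) =
      (n.factorial : ℚ) / m.factorial * (n - 1).choose (m - 1) := by
  obtain ⟨m, rfl⟩ : ∃ m', m = m' + 1 := ⟨m - 1, by omega⟩
  obtain ⟨n, rfl⟩ : ∃ n', n = n' + 1 := ⟨n - 1, by omega⟩
  have hsum : ∑ k ∈ Icc (m + 1) (n + 1), stirling1 (n + 1) k * stirling2 k (m + 1) =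
      Nat.lah (n + 1) (m + 1) := by
    rw [← Nat.sum_range_stirlingFirst_mul_stirlingSecond (N := n + 2) (by omega)]
    simp only [stirling1_eq_stirlingFirst, stirling2_eq_stirlingSecond]
    refine sum_subset (fun k hk => by simp only [mem_Icc, mem_range] at hk ⊢; omega)
      fun k hk hk' => ?_
    simp only [mem_Icc, mem_range] at hk hk'
    rw [Nat.stirlingSecond_eq_zero_of_lt (by omega), mul_zero]
  have hlah : ((m + 1).factorial * Nat.lah (n + 1) (m + 1) : ℚ) =
      (n + 1).factorial * n.choose m := by
    exact_mod_cast Nat.factorial_mul_lah_succ_succ n m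
  rw [Nat.add_sub_cancel, Nat.add_sub_cancel, div_mul_eq_mul_div, ← hlah]
  field_simp
  exact_mod_cast hsum
end

section
/- For integers 1 ≤ m ≤ n and any element λ of a commutative ring (or rational/polynomial variable), the double sum over i from m to n and j from m to i of (-1)^(n+i) * [n,i] * C(i,j) * {j,m} * λ^(i-j) equals (n!/m!) * C(λ, n-m), where C(λ, r) = λ(λ-1)⋯(λ-r+1)/r! is the generalized binomial coefficient. -/
open Finset

/-!
Writing `m! S(j,m) = Δ^m (x ↦ x^j) (0) = ∑_t (-1)^(m-t) C(m,t) t^j`, the sum over `j` becomes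
the binomial expansion of `(t + λ)^i`, and the signed Stirling numbers of the first kind turn
`∑_i (-1)^(n+i) [n,i] (t + λ)^i` into the falling factorial `(λ + t)_n`. Hence `m!` times the
left side is `Δ^m (x ↦ (x)_n) (λ) = n!/(n-m)! · (λ)_(n-m)`, since `Δ (x)_k = k (x)_(k-1)`.
-/

open Finset Polynomial fwdDiff
open scoped Nat
open Nat (stirlingFirst stirlingSecond)

theorem stirling1_eq_stirlingFirst_s2 : stirling1 = stirlingFirst := by
  funext n k
  induction n generalizing k with
  | zero => cases k <;> rfl
  | succ n ih =>
    cases k with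
    | zero => rfl
    | succ k => simp only [stirling1, Nat.stirlingFirst_succ_succ, ih]

theorem stirling2_eq_stirlingSecond_s2 : stirling2 = stirlingSecond := by
  funext n k
  induction n generalizing k with
  | zero => cases k <;> rfl
  | succ n ih =>
    cases k with
    | zero => rfl
    | succ k => simp only [stirling2, Nat.stirlingSecond_succ_succ, ih]

theorem sum_Icc_Icc_eq_sum_range_range {M : Type*} [AddCommMonoid M] {m : ℕ} (n : ℕ)
    (f : ℕ → ℕ → M) (hf : ∀ i j, j < m → f i j = 0) :
    ∑ i ∈ Icc m n, ∑ j ∈ Icc m i, f i j =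
      ∑ i ∈ range (n + 1), ∑ j ∈ range (i + 1), f i j := by
  have hinner (i : ℕ) : ∑ j ∈ Icc m i, f i j = ∑ j ∈ range (i + 1), f i j :=
    sum_subset (fun j hj => by simp only [mem_Icc, mem_range] at hj ⊢; omega)
      fun j hj hj' => hf i j (by simp only [mem_Icc, mem_range] at hj hj'; omega)
  simp only [hinner]
  refine sum_subset (fun i hi => by simp only [mem_Icc, mem_range] at hi ⊢; omega)
    fun i hi hi' => sum_eq_zero fun j hj => hf i j ?_
  simp only [mem_Icc, mem_range] at hi hi' hj
  omega

section CommRing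

variable {R : Type*} [CommRing R]

theorem coeff_descPochhammer (n i : ℕ) :
    (descPochhammer R n).coeff i = (-1) ^ (n + i) * (stirlingFirst n i : R) := by
  induction n generalizing i with
  | zero => cases i <;> simp [coeff_one]
  | succ n ih =>
    cases i with
    | zero => simp [coeff_zero_eq_eval_zero]
    | succ i =>
      rw [descPochhammer_succ_right, ← C_eq_natCast, coeff_mul_X_sub_C, ih, ih,
        Nat.stirlingFirst_succ_succ]
      push_cast
      ring

theorem descPochhammer_eval_eq_sum_stirlingFirst (n : ℕ) (x : R) :
    (descPochhammer R n).eval x =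
      ∑ i ∈ range (n + 1), (-1) ^ (n + i) * (stirlingFirst n i : R) * x ^ i := by
  have hdeg : (descPochhammer R n).natDegree < n + 1 :=
    Nat.lt_succ_of_le <| natDegree_le_iff_coeff_eq_zero.mpr fun i hi => by
      rw [coeff_descPochhammer, Nat.stirlingFirst_eq_zero_of_lt (by exact_mod_cast hi)]
      simp
  simp only [eval_eq_sum_range' hdeg, coeff_descPochhammer]

theorem pow_eq_sum_stirlingSecond_mul_descPochhammer_eval (j : ℕ) (x : R) :
    x ^ j = ∑ k ∈ range (j + 1), (stirlingSecond j k : R) * (descPochhammer R k).eval x := by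
  induction j with
  | zero => simp
  | succ j ih =>
    have hshift :
        ∑ k ∈ range (j + 1), (k * stirlingSecond j k : R) * (descPochhammer R k).eval x =
        ∑ k ∈ range (j + 1),
          ((k + 1 : ℕ) * stirlingSecond j (k + 1) : R) * (descPochhammer R (k + 1)).eval x := by
      -- the summand vanishes at `k = 0` and at `k = j + 1`
      have h := sum_range_succ
        (fun k => (k * stirlingSecond j k : R) * (descPochhammer R k).eval x) (j + 1)
      rw [sum_range_succ', Nat.stirlingSecond_eq_zero_of_lt j.lt_succ_self] at h
      simpa using h.symm
    calc x ^ (j + 1)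
      _ = ∑ k ∈ range (j + 1), (stirlingSecond j k : R) * (descPochhammer R (k + 1)).eval x +
          ∑ k ∈ range (j + 1), (k * stirlingSecond j k : R) * (descPochhammer R k).eval x := by
        rw [pow_succ, ih, sum_mul, ← sum_add_distrib]
        refine sum_congr rfl fun k _ => ?_
        rw [descPochhammer_succ_eval]
        ring
      _ = ∑ k ∈ range (j + 2), (stirlingSecond (j + 1) k : R) * (descPochhammer R k).eval x := by
        rw [hshift, sum_range_succ' _ (j + 1), ← sum_add_distrib]
        simp only [Nat.stirlingSecond_succ_succ, Nat.stirlingSecond_succ_zero]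
        push_cast
        simp only [zero_mul, add_zero]
        refine sum_congr rfl fun k _ => ?_
        ring

theorem fwdDiff_descPochhammer_eval (n : ℕ) :
    Δ_[1] (descPochhammer R n).eval = (n : R) • (descPochhammer R (n - 1)).eval := by
  funext x
  cases n with
  | zero => simp [fwdDiff]
  | succ n =>
    have hshift :
        (descPochhammer R (n + 1)).eval (x + 1) = (x + 1) * (descPochhammer R n).eval x := by
      simp [descPochhammer_succ_left]
    rw [fwdDiff, hshift, descPochhammer_succ_eval, Pi.smul_apply, smul_eq_mul,
      Nat.add_sub_cancel]
    push_cast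
    ring

theorem fwdDiff_iter_descPochhammer_eval (m n : ℕ) :
    Δ_[1] ^[m] (descPochhammer R n).eval =
      (n.descFactorial m : R) • (descPochhammer R (n - m)).eval := by
  induction m with
  | zero => simp
  | succ m ih =>
    rw [Function.iterate_succ_apply', ih, fwdDiff_const_smul, fwdDiff_descPochhammer_eval,
      smul_smul, Nat.descFactorial_succ, Nat.sub_sub]
    push_cast
    ring_nf

theorem fwdDiff_iter_pow_zero_eq_factorial_mul_stirlingSecond (m j : ℕ) :
    Δ_[1] ^[m] (fun x : R => x ^ j) 0 = m ! * stirlingSecond j m := by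
  have hpow : (fun x : R => x ^ j) =
      ∑ k ∈ range (j + 1), (stirlingSecond j k : R) • (descPochhammer R k).eval := by
    funext x
    simp only [pow_eq_sum_stirlingSecond_mul_descPochhammer_eval j x, Finset.sum_apply,
      Pi.smul_apply, smul_eq_mul]
  simp only [hpow, fwdDiff_iter_finsetSum, fwdDiff_iter_const_smul,
    fwdDiff_iter_descPochhammer_eval, Finset.sum_apply, Pi.smul_apply, smul_eq_mul,
    descPochhammer_eval_zero]
  rw [sum_eq_single m]
  · simp only [Nat.descFactorial_self, tsub_self, ↓reduceIte, mul_one]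
    ring
  · intro k _ hk
    rcases hk.lt_or_gt with h | h
    · simp [Nat.descFactorial_eq_zero_iff_lt.mpr h]
    · simp [show k - m ≠ 0 by omega]
  · intro hm
    simp only [mem_range, not_lt] at hm
    simp [Nat.stirlingSecond_eq_zero_of_lt (by omega : j < m)]

theorem factorial_mul_sum_stirlingFirst_choose_stirlingSecond (m n : ℕ) (l : R) :
    (m ! : R) * ∑ i ∈ range (n + 1), ∑ j ∈ range (i + 1),
        (-1) ^ (n + i) * (stirlingFirst n i : R) * i.choose j * stirlingSecond j m * l ^ (i - j) =
      n.descFactorial m * (descPochhammer R (n - m)).eval l := by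
  have hstirling (j : ℕ) : (m ! * stirlingSecond j m : R) =
      ∑ t ∈ range (m + 1), ((-1) ^ (m - t) * m.choose t : ℤ) • (t : R) ^ j := by
    rw [← fwdDiff_iter_pow_zero_eq_factorial_mul_stirlingSecond, fwdDiff_iter_eq_sum_shift]
    simp
  calc (m ! : R) * ∑ i ∈ range (n + 1), ∑ j ∈ range (i + 1),
          (-1) ^ (n + i) * (stirlingFirst n i : R) * i.choose j * stirlingSecond j m *
            l ^ (i - j)
      = ∑ t ∈ range (m + 1), ((-1) ^ (m - t) * m.choose t : ℤ) •
          ∑ i ∈ range (n + 1), (-1) ^ (n + i) * (stirlingFirst n i : R) * (t + l) ^ i := by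
        simp only [add_pow, mul_sum, smul_sum]
        rw [sum_comm]
        refine sum_congr rfl fun i _ => ?_
        rw [sum_comm]
        refine sum_congr rfl fun j _ => ?_
        rw [show ∀ a b c d e : R, m ! * (a * b * c * d * e) = a * b * c * e * (m ! * d) by
          intros; ring, hstirling, mul_sum]
        refine sum_congr rfl fun t _ => ?_
        simp only [zsmul_eq_mul]
        ring
    _ = Δ_[1] ^[m] (descPochhammer R n).eval l := by
        rw [fwdDiff_iter_eq_sum_shift]
        simp [descPochhammer_eval_eq_sum_stirlingFirst, add_comm]
    _ = n.descFactorial m * (descPochhammer R (n - m)).eval l := by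
        rw [fwdDiff_iter_descPochhammer_eval]
        rfl

end CommRing

theorem stmt2_general (m n : ℕ) (hmn : m ≤ n) (l : ℚ) :
    ∑ i ∈ Finset.Icc m n, ∑ j ∈ Finset.Icc m i,
        (-1 : ℚ) ^ (n + i) * stirling1 n i * i.choose j * stirling2 j m * l ^ (i - j) =
      (n.factorial : ℚ) / m.factorial * gchoose l (n - m) := by
  have hidentity := factorial_mul_sum_stirlingFirst_choose_stirlingSecond m n l
  rw [stirling1_eq_stirlingFirst_s2, stirling2_eq_stirlingSecond_s2,
    sum_Icc_Icc_eq_sum_range_range n _ fun i j hj => by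
      simp [Nat.stirlingSecond_eq_zero_of_lt hj]]
  rw [gchoose, Algebra.algebraMap_self, RingHom.id_apply, ← descPochhammer_eval_eq_prod_range,
    ← Nat.factorial_mul_descFactorial hmn]
  field_simp
  push_cast
  linear_combination (n - m)! * hidentity

theorem stmt2 (m n : ℕ) (hm : 1 ≤ m) (hmn : m ≤ n) (l : ℚ) :
    ∑ i ∈ Finset.Icc m n, ∑ j ∈ Finset.Icc m i,
        (-1 : ℚ) ^ (n + i) * stirling1 n i * i.choose j * stirling2 j m * l ^ (i - j) =
      (n.factorial : ℚ) / m.factorial * gchoose l (n - m) :=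
  stmt2_general m n hmn l
end

section
/- For integers 1 ≤ m ≤ n, the sum over k from m to n of [n,k] * {k,m} * (-2)^(n-k) equals ((n-1)!/(m-1)!) * C(-n, n-m) * 2^(m-n), where C(-n, n-m) = (-1)^(n-m) C(2n-m-1, n-m). -/
open Finset

/-!
Put `S(n, m) = ∑ₖ [n,k] {k,m} xⁿ⁻ᵏ`. The recurrences of the two kinds of Stirling numbers combine
into `S(n+1, m+1) = (n x + m + 1) S(n, m+1) + S(n, m)`, with `S(n, n) = 1` and `S(n+1, 0) = 0`.
At `x = -2` the signed Bessel coefficients `(-1)ᵃ (s+2a)! / (s! a! 2ᵃ)` satisfy the same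
recurrence in `m = s + 1`, `n = s + 1 + a`, and `C(-n, r) = (-1)ʳ C(n+r-1, r)` turns the
right-hand side into exactly this coefficient.
-/

lemma stirling1_eq_zero_of_lt : ∀ {n k : ℕ}, n < k → stirling1 n k = 0
  | 0, 0, h | _ + 1, 0, h => absurd h (by omega)
  | 0, _ + 1, _ => rfl
  | n + 1, k + 1, h => by
    rw [stirling1, stirling1_eq_zero_of_lt (by omega : n < k + 1),
      stirling1_eq_zero_of_lt (by omega : n < k), mul_zero]

lemma stirling2_eq_zero_of_lt : ∀ {n k : ℕ}, n < k → stirling2 n k = 0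
  | 0, 0, h | _ + 1, 0, h => absurd h (by omega)
  | 0, _ + 1, _ => rfl
  | n + 1, k + 1, h => by
    rw [stirling2, stirling2_eq_zero_of_lt (by omega : n < k + 1),
      stirling2_eq_zero_of_lt (by omega : n < k), mul_zero]

section StirlingSum

variable {R : Type*} [CommRing R]

def stirlingSum (x : R) (n m : ℕ) : R :=
  ∑ k ∈ range (n + 1), (stirling1 n k : R) * stirling2 k m * x ^ (n - k)

variable {x : R}

lemma sum_Icc_eq_stirlingSum (n m : ℕ) :
    ∑ k ∈ Icc m n, (stirling1 n k : R) * stirling2 k m * x ^ (n - k) = stirlingSum x n m := by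
  refine sum_subset (fun k hk ↦ by grind) fun k _ hk ↦ ?_
  rw [stirling2_eq_zero_of_lt (by grind)]
  simp

lemma stirlingSum_eq_zero_of_lt {n m : ℕ} (h : n < m) : stirlingSum x n m = 0 :=
  sum_eq_zero fun k hk ↦ by
    rw [stirling2_eq_zero_of_lt (by grind)]
    simp

lemma stirlingSum_succ_zero (n : ℕ) : stirlingSum x (n + 1) 0 = 0 := by
  refine sum_eq_zero fun k _ ↦ ?_
  cases k <;> simp [stirling1, stirling2]

lemma sum_stirling_succ_eq_mul_stirlingSum (n t : ℕ) :
    ∑ i ∈ range (n + 1), (stirling1 n (i + 1) : R) * stirling2 (i + 1) (t + 1) * x ^ (n - i) =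
      x * stirlingSum x n (t + 1) := by
  rw [stirlingSum, sum_range_succ, stirling1_eq_zero_of_lt n.lt_succ_self, mul_sum,
    sum_range_succ', stirling2_eq_zero_of_lt t.succ_pos]
  simp only [Nat.cast_zero, zero_mul, mul_zero, add_zero]
  refine sum_congr rfl fun i hi ↦ ?_
  rw [show n - i = n - (i + 1) + 1 by grind, pow_succ]
  ring

lemma stirlingSum_succ_succ (n t : ℕ) :
    stirlingSum x (n + 1) (t + 1) =
      (n * x + t + 1) * stirlingSum x n (t + 1) + stirlingSum x n t := by
  have expand (i : ℕ) :
      (stirling1 (n + 1) (i + 1) : R) * stirling2 (i + 1) (t + 1) * x ^ (n - i) =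
      n * ((stirling1 n (i + 1) : R) * stirling2 (i + 1) (t + 1) * x ^ (n - i)) +
        (t + 1) * ((stirling1 n i : R) * stirling2 i (t + 1) * x ^ (n - i)) +
        (stirling1 n i : R) * stirling2 i t * x ^ (n - i) := by
    simp only [stirling1, stirling2]
    push_cast
    ring
  rw [stirlingSum, sum_range_succ', show stirling1 (n + 1) 0 = 0 from rfl]
  simp only [Nat.cast_zero, zero_mul, add_zero, Nat.add_sub_add_right, expand, sum_add_distrib,
    ← mul_sum, sum_stirling_succ_eq_mul_stirlingSum]
  rw [stirlingSum, stirlingSum]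
  ring

lemma stirlingSum_self (n : ℕ) : stirlingSum x n n = 1 := by
  induction n with
  | zero => simp [stirlingSum, stirling1, stirling2]
  | succ n ih => rw [stirlingSum_succ_succ, stirlingSum_eq_zero_of_lt n.lt_succ_self, ih]; ring

end StirlingSum

open Nat

/-- The coefficient of `x ^ a` in the Bessel polynomial `y_{s+a}(-x)`. -/
def besselCoeff (s a : ℕ) : ℚ :=
  (-1) ^ a * (s + 2 * a)! / (s ! * a ! * 2 ^ a)

lemma besselCoeff_zero_right (s : ℕ) : besselCoeff s 0 = 1 := by
  simp [besselCoeff, s.factorial_ne_zero]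

lemma besselCoeff_zero_succ (a : ℕ) :
    besselCoeff 0 (a + 1) = -(2 * a + 1) * besselCoeff 0 a := by
  simp only [besselCoeff, zero_add, show 2 * (a + 1) = 2 * a + 1 + 1 by ring, factorial_succ]
  field_simp
  push_cast
  ring

lemma besselCoeff_succ_succ (s a : ℕ) :
    besselCoeff (s + 1) (a + 1) =
      -(s + 2 * a + 2) * besselCoeff (s + 1) a + besselCoeff s (a + 1) := by
  simp only [besselCoeff, show s + 1 + 2 * (a + 1) = s + 2 * a + 1 + 1 + 1 by ring,
    show s + 2 * (a + 1) = s + 2 * a + 1 + 1 by ring, show s + 1 + 2 * a = s + 2 * a + 1 by ring,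
    factorial_succ]
  field_simp
  push_cast
  ring

theorem stirlingSum_neg_two_eq_besselCoeff (s a : ℕ) :
    stirlingSum (-2 : ℚ) (s + 1 + a) (s + 1) = besselCoeff s a := by
  induction s generalizing a with
  | zero =>
    induction a with
    | zero => rw [stirlingSum_self, besselCoeff_zero_right]
    | succ a ih =>
      rw [zero_add, add_comm] at ih
      rw [show 0 + 1 + (a + 1) = a + 1 + 1 by ring, stirlingSum_succ_succ, stirlingSum_succ_zero,
        ih, besselCoeff_zero_succ]
      push_cast
      ring
  | succ s ihs =>
    induction a with
    | zero => rw [stirlingSum_self, besselCoeff_zero_right]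
    | succ a iha =>
      rw [← add_assoc, stirlingSum_succ_succ, iha, show s + 1 + 1 + a = s + 1 + (a + 1) by ring,
        ihs, besselCoeff_succ_succ]
      push_cast
      ring

lemma gchoose_neg_natCast {R : Type*} [CommRing R] [Algebra ℚ R] (n r : ℕ) :
    gchoose (-(n : R)) r = (-1) ^ r * ((n + r - 1).choose r : R) := by
  have hprod : ∏ i ∈ range r, (-(n : R) - i) = (-1) ^ r * r ! * (n + r - 1).choose r := by
    have hfactor (i : ℕ) : -(n : R) - i = -1 * ((n + i : ℕ) : R) := by push_cast; ring
    rw [mul_assoc, ← Nat.cast_mul, ← ascFactorial_eq_factorial_mul_choose',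
      ascFactorial_eq_prod_range, prod_congr rfl fun i _ ↦ hfactor i, prod_mul_distrib, prod_const,
      card_range, Nat.cast_prod]
  have hinv : algebraMap ℚ R (r ! : ℚ)⁻¹ * (r ! : R) = 1 := by
    rw [← map_natCast (algebraMap ℚ R), ← map_mul, inv_mul_cancel₀ (by positivity), map_one]
  rw [gchoose, hprod]
  linear_combination (-1) ^ r * ((n + r - 1).choose r : R) * hinv

theorem stmt7 (m n : ℕ) (hm : 1 ≤ m) (hmn : m ≤ n) :
    ∑ k ∈ Finset.Icc m n, (stirling1 n k : ℚ) * stirling2 k m * (-2 : ℚ) ^ (n - k) =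
      ((n - 1).factorial : ℚ) / (m - 1).factorial * gchoose (-(n : ℚ)) (n - m) *
        (2 : ℚ) ^ ((m : ℤ) - n) := by
  obtain ⟨s, rfl⟩ : ∃ s, m = s + 1 := ⟨m - 1, by omega⟩
  obtain ⟨a, rfl⟩ : ∃ a, n = s + 1 + a := ⟨n - (s + 1), by omega⟩
  rw [sum_Icc_eq_stirlingSum, stirlingSum_neg_two_eq_besselCoeff, gchoose_neg_natCast, besselCoeff,
    show s + 1 + a - 1 = s + a by omega, show s + 1 + a - (s + 1) = a by omega,
    show s + 1 + a + a - 1 = s + 2 * a by omega, Nat.add_sub_cancel,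
    cast_choose ℚ (by omega : a ≤ s + 2 * a), show s + 2 * a - a = s + a by omega]
  push_cast
  rw [show (s : ℤ) + 1 - (s + 1 + a) = -a by ring, zpow_neg, zpow_natCast]
  field_simp
end

section
/- Define the polynomial sequence Q_n in ℚ[x, y, λ] by Q_0 = 1 and Q_n = (-1)^n C(λ, n) - x * sum_{k=1}^{n} (-1)^k C(y, k) Q_{n-k} for n ≥ 1, where C(λ, n) and C(y, k) are generalized binomial coefficient polynomials. Then Q_n = sum_{m=0}^{n} sum_{k=0}^{m} (-1)^{n+k} C(m,k) C(λ+ky, n) x^m. -/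
/-
Let `c n m` be the `m`-th forward difference with step `y` of `r ↦ C(r, n)`, taken at `l` (= λ);
the claimed double sum is `∑_m (-1)^(n+m) c n m x^m`. By Chu–Vandermonde,
`Δ_y C(·, n) = ∑_{k=1}^n C(y, k) C(·, n - k)`. Hence `c n m = 0` for `m > n`, and
`c n (m + 1) = ∑_{k=1}^n C(y, k) c (n - k) m`, which says precisely that these double sums
satisfy the recurrence defining `Q_n`.
-/

open Finset

theorem descPochhammer_smeval_eq_prod_range {R : Type*} [CommRing R] (x : R) (n : ℕ) :
    (descPochhammer ℤ n).smeval x = ∏ i ∈ range n, (x - i) := by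
  rw [← Polynomial.aeval_eq_smeval, ← descPochhammer_eval_eq_prod_range,
    ← descPochhammer_map (algebraMap ℤ R), Polynomial.eval_map_algebraMap]

theorem gchoose_eq_choose {R : Type*} [CommRing R] [Algebra ℚ R] [BinomialRing R] (x : R)
    (n : ℕ) : gchoose x n = Ring.choose x n := by
  have hfac : (n.factorial : ℚ) ≠ 0 := Nat.cast_ne_zero.mpr n.factorial_ne_zero
  rw [gchoose, ← descPochhammer_smeval_eq_prod_range, Ring.descPochhammer_eq_factorial_smul_choose,
    nsmul_eq_mul, ← mul_assoc, ← map_natCast (algebraMap ℚ R), ← map_mul, inv_mul_cancel₀ hfac,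
    map_one, one_mul]

open fwdDiff

namespace Ring

variable {R : Type*} [CommRing R] [BinomialRing R]

theorem fwdDiff_choose (h : R) (n : ℕ) :
    Δ_[h] (fun r ↦ choose r n) = ∑ k ∈ Icc 1 n, choose h k • fun r ↦ choose r (n - k) := by
  funext r
  rw [fwdDiff, add_comm, add_choose_eq n (Commute.all h r),
    Nat.sum_antidiagonal_eq_sum_range_succ (fun i j ↦ choose h i * choose r j),
    sum_range_eq_add_Ico _ (Nat.succ_pos n), Nat.succ_eq_add_one, Ico_add_one_right_eq_Icc,
    choose_zero_right, one_mul, Nat.sub_zero, add_sub_cancel_left, Finset.sum_apply]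
  rfl

theorem fwdDiff_iter_succ_choose (h : R) (n m : ℕ) :
    (Δ_[h])^[m + 1] (fun r ↦ choose r n) =
      ∑ k ∈ Icc 1 n, choose h k • (Δ_[h])^[m] (fun r ↦ choose r (n - k)) := by
  simp only [Function.iterate_succ_apply, fwdDiff_choose, fwdDiff_iter_finsetSum,
    fwdDiff_iter_const_smul]

theorem fwdDiff_iter_choose_of_lt (h : R) {n m : ℕ} (hnm : n < m) :
    (Δ_[h])^[m] (fun r ↦ choose r n) = 0 := by
  induction m generalizing n with
  | zero => omega
  | succ m ih =>
    rw [fwdDiff_iter_succ_choose]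
    exact sum_eq_zero fun k hk ↦ by rw [ih (by grind), smul_zero]

end Ring

section FwdDiffChoosePoly

variable {R : Type*} [CommRing R] [BinomialRing R] (x y l : R)

noncomputable def fwdDiffChoosePoly (n : ℕ) : R :=
  ∑ m ∈ range (n + 1), (-1) ^ (n + m) * (Δ_[y])^[m] (fun r ↦ Ring.choose r n) l * x ^ m

theorem fwdDiffChoosePoly_eq_sum_range_of_le {n N : ℕ} (hnN : n ≤ N) :
    fwdDiffChoosePoly x y l n =
      ∑ m ∈ range (N + 1), (-1) ^ (n + m) * (Δ_[y])^[m] (fun r ↦ Ring.choose r n) l * x ^ m := by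
  refine sum_subset (range_subset_range.mpr (by omega)) fun m hmN hmn ↦ ?_
  rw [Ring.fwdDiff_iter_choose_of_lt y (by simp only [mem_range] at hmN hmn; omega),
    Pi.zero_apply, mul_zero, zero_mul]

theorem sum_choose_mul_fwdDiffChoosePoly_sub (n : ℕ) :
    ∑ k ∈ Icc 1 n, (-1) ^ k * Ring.choose y k * fwdDiffChoosePoly x y l (n - k) =
      ∑ m ∈ range (n + 1),
        (-1) ^ (n + m) * (Δ_[y])^[m + 1] (fun r ↦ Ring.choose r n) l * x ^ m := by
  calc ∑ k ∈ Icc 1 n, (-1) ^ k * Ring.choose y k * fwdDiffChoosePoly x y l (n - k)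
      = ∑ k ∈ Icc 1 n, ∑ m ∈ range (n + 1), (-1) ^ (n + m) *
          (Ring.choose y k * (Δ_[y])^[m] (fun r ↦ Ring.choose r (n - k)) l) * x ^ m := by
        refine sum_congr rfl fun k hk ↦ ?_
        have hsign : (-1 : R) ^ k * (-1) ^ (n - k) = (-1) ^ n := by
          rw [← pow_add, Nat.add_sub_cancel' (mem_Icc.mp hk).2]
        rw [fwdDiffChoosePoly_eq_sum_range_of_le x y l (Nat.sub_le n k), mul_sum]
        refine sum_congr rfl fun m _ ↦ ?_
        rw [pow_add, pow_add, ← hsign]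
        ring
    _ = ∑ m ∈ range (n + 1),
          (-1) ^ (n + m) * (Δ_[y])^[m + 1] (fun r ↦ Ring.choose r n) l * x ^ m := by
        rw [sum_comm]
        refine sum_congr rfl fun m _ ↦ ?_
        simp only [Ring.fwdDiff_iter_succ_choose, Finset.sum_apply, Pi.smul_apply, smul_eq_mul,
          mul_sum, sum_mul]

theorem fwdDiffChoosePoly_eq (n : ℕ) :
    fwdDiffChoosePoly x y l n = (-1) ^ n * Ring.choose l n -
      x * ∑ k ∈ Icc 1 n, (-1) ^ k * Ring.choose y k * fwdDiffChoosePoly x y l (n - k) := by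
  rw [sum_choose_mul_fwdDiffChoosePoly_sub, mul_sum,
    fwdDiffChoosePoly_eq_sum_range_of_le x y l (Nat.le_succ n), sum_range_succ',
    Function.iterate_zero, id_eq, add_zero, pow_zero, mul_one, sub_eq_neg_add, ← sum_neg_distrib]
  congr 1
  exact sum_congr rfl fun m _ ↦ by ring

theorem fwdDiffChoosePoly_eq_sum_sum (n : ℕ) :
    fwdDiffChoosePoly x y l n = ∑ m ∈ range (n + 1), ∑ k ∈ range (m + 1),
      (-1) ^ (n + k) * (m.choose k : R) * Ring.choose (l + (k : R) * y) n * x ^ m := by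
  refine sum_congr rfl fun m _ ↦ ?_
  rw [fwdDiff_iter_eq_sum_shift, mul_sum, sum_mul]
  refine sum_congr rfl fun k hk ↦ ?_
  have hsign : (-1 : R) ^ (n + m) * (-1) ^ (m - k) = (-1) ^ (n + k) := by
    rw [← pow_add, show n + m + (m - k) = n + k + 2 * (m - k) by grind, pow_add, pow_mul,
      neg_one_sq, one_pow, mul_one]
  rw [zsmul_eq_mul, nsmul_eq_mul, ← hsign]
  push_cast
  ring

end FwdDiffChoosePoly

open MvPolynomial in
theorem stmt9_general (Q : ℕ → MvPolynomial (Fin 3) ℚ)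
    (x y l : MvPolynomial (Fin 3) ℚ)
    (hQ0 : Q 0 = 1)
    (hQ : ∀ n : ℕ, 1 ≤ n →
      Q n = (-1) ^ n * gchoose l n -
        x * ∑ k ∈ Finset.Icc 1 n, (-1) ^ k * gchoose y k * Q (n - k)) :
    ∀ n : ℕ, Q n = ∑ m ∈ Finset.range (n + 1), ∑ k ∈ Finset.range (m + 1),
      (-1) ^ (n + k) * (m.choose k : MvPolynomial (Fin 3) ℚ) *
        gchoose (l + (k : MvPolynomial (Fin 3) ℚ) * y) n * x ^ m := by
  intro n
  simp only [gchoose_eq_choose] at hQ ⊢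
  rw [← fwdDiffChoosePoly_eq_sum_sum]
  induction n using Nat.strong_induction_on with
  | _ n ih =>
    rcases n.eq_zero_or_pos with rfl | hn
    · simp [hQ0, fwdDiffChoosePoly]
    · rw [hQ n hn, fwdDiffChoosePoly_eq]
      congr 2
      exact sum_congr rfl fun k hk ↦ by rw [ih (n - k) (by grind)]

open MvPolynomial in
theorem stmt9 (Q : ℕ → MvPolynomial (Fin 3) ℚ)
    (x y l : MvPolynomial (Fin 3) ℚ) (hx : x = X 0) (hy : y = X 1) (hl : l = X 2)
    (hQ0 : Q 0 = 1)
    (hQ : ∀ n : ℕ, 1 ≤ n →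
      Q n = (-1) ^ n * gchoose l n -
        x * ∑ k ∈ Finset.Icc 1 n, (-1) ^ k * gchoose y k * Q (n - k)) :
    ∀ n : ℕ, Q n = ∑ m ∈ Finset.range (n + 1), ∑ k ∈ Finset.range (m + 1),
      (-1) ^ (n + k) * (m.choose k : MvPolynomial (Fin 3) ℚ) *
        gchoose (l + (k : MvPolynomial (Fin 3) ℚ) * y) n * x ^ m :=
  stmt9_general Q x y l hQ0 hQ
end
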